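/- Let T(λ, ξ) := (ξ²/(λ + ξ²))^{λ + ξ²} · e^{λ} for λ > 0, ξ > 0. Then 0 < T(λ, ξ) ≤ 1, and T(λ, ξ) is monotonically increasing in ξ for fixed λ. -/

import Mathlib

/-!
With `r = ξ² / (λ + ξ²) ∈ (0, 1)` one has `λ + ξ² = λ / (1 - r)`, hence
`T(λ, ξ) = exp (λ (1 - log r / (r - 1)))`. The quotient `log r / (r - 1)` is the slope of the chord
of the concave function `log` between `r` and `1`: it is at least `log' 1 = 1`, which gives `T ≤ 1`,
and it decreases as `r` grows, while `r` grows with `ξ`.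
-/

open Real Set

lemma log_div_sub_one_antitoneOn : AntitoneOn (fun r : ℝ ↦ log r / (r - 1)) (Ioo 0 1) := by
  intro r hr s hs hrs
  have hslope := strictConcaveOn_log_Ioi.concaveOn.neg.secant_mono (a := 1) (x := r) (y := s)
    (mem_Ioi.2 one_pos) (mem_Ioi.2 hr.1) (mem_Ioi.2 hs.1) hr.2.ne hs.2.ne hrs
  simp only [Pi.neg_apply, log_one, neg_zero, sub_zero, neg_div] at hslope
  exact neg_le_neg_iff.1 hslope

lemma one_le_log_div_sub_one {r : ℝ} (hr : r ∈ Ioo 0 1) : 1 ≤ log r / (r - 1) := by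
  rw [le_div_iff_of_neg (by linarith [hr.2]), one_mul]
  exact log_le_sub_one_of_pos hr.1

lemma div_add_self_mem_Ioo {lam x : ℝ} (hlam : 0 < lam) (hx : 0 < x) :
    x / (lam + x) ∈ Ioo 0 1 :=
  ⟨by positivity, (div_lt_one (by positivity)).2 (by linarith)⟩

lemma div_add_self_monotoneOn {lam : ℝ} (hlam : 0 ≤ lam) :
    MonotoneOn (fun x : ℝ ↦ x / (lam + x)) (Ioi 0) := by
  intro x hx y hy hxy
  simp only [mem_Ioi] at hx hy
  rw [div_le_div_iff₀ (by positivity) (by positivity)]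
  nlinarith

lemma div_add_self_rpow_mul_exp {lam x : ℝ} (hlam : 0 < lam) (hx : 0 < x) :
    (x / (lam + x)) ^ (lam + x) * exp lam =
      exp (lam * (1 - log (x / (lam + x)) / (x / (lam + x) - 1))) := by
  have hlx : lam + x ≠ 0 := by positivity
  have hr : x / (lam + x) - 1 = -lam / (lam + x) := by field_simp; ring
  rw [rpow_def_of_pos (by positivity), ← exp_add, hr]
  congr 1
  field_simp
  ring

/-- Let `T(λ, ξ) := (ξ²/(λ + ξ²))^(λ + ξ²) · e^λ` for `λ > 0`, `ξ > 0`. Then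
`0 < T(λ, ξ) ≤ 1`, and `T(λ, ξ)` is monotonically increasing in `ξ` for fixed `λ`. -/
theorem T_bound_properties
    (T : ℝ → ℝ → ℝ)
    (hT : ∀ lam ξ : ℝ, T lam ξ = (ξ ^ 2 / (lam + ξ ^ 2)) ^ (lam + ξ ^ 2) * Real.exp lam) :
    (∀ lam ξ : ℝ, 0 < lam → 0 < ξ → 0 < T lam ξ ∧ T lam ξ ≤ 1) ∧
    (∀ lam : ℝ, 0 < lam → ∀ ξ₁ ξ₂ : ℝ, 0 < ξ₁ → ξ₁ ≤ ξ₂ → T lam ξ₁ ≤ T lam ξ₂) := by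
  have hT' : ∀ lam ξ : ℝ, 0 < lam → 0 < ξ → T lam ξ =
      exp (lam * (1 - log (ξ ^ 2 / (lam + ξ ^ 2)) / (ξ ^ 2 / (lam + ξ ^ 2) - 1))) :=
    fun lam ξ hlam hξ ↦ (hT lam ξ).trans (div_add_self_rpow_mul_exp hlam (by positivity))
  refine ⟨fun lam ξ hlam hξ ↦ ?_, fun lam hlam ξ₁ ξ₂ hξ₁ hξ ↦ ?_⟩
  · rw [hT' lam ξ hlam hξ]
    refine ⟨exp_pos _, exp_le_one_iff.2 (mul_nonpos_of_nonneg_of_nonpos hlam.le ?_)⟩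
    linarith [one_le_log_div_sub_one (div_add_self_mem_Ioo hlam (pow_pos hξ 2))]
  · have hξ₂ : 0 < ξ₂ := hξ₁.trans_le hξ
    rw [hT' lam ξ₁ hlam hξ₁, hT' lam ξ₂ hlam hξ₂, exp_le_exp]
    have hsq : ξ₁ ^ 2 ≤ ξ₂ ^ 2 := pow_le_pow_left₀ hξ₁.le hξ 2
    have hr := div_add_self_monotoneOn hlam.le (mem_Ioi.2 (pow_pos hξ₁ 2))
      (mem_Ioi.2 (pow_pos hξ₂ 2)) hsq
    have hslope := log_div_sub_one_antitoneOn (div_add_self_mem_Ioo hlam (pow_pos hξ₁ 2))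
      (div_add_self_mem_Ioo hlam (pow_pos hξ₂ 2)) hr
    gcongr
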